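/- arXiv:2312.17737 — 4 statements merged into one kernel-verified Lean document; each statement's English description precedes it below -/
import Mathlib

section
/- Let p ∈ (1,n), let Ω ⊆ ℝ^n be a nonempty open set, let M be an n×n real symmetric positive definite matrix, and let G : ℝ^d → ℝ be continuous and positively homogeneous of degree p* = np/(n−p). Then for every x₀ ∈ closure(Ω) and every δ > 0, the localized constant S_{x₀,δ}(M;G), defined by S_{x₀,δ}(M;G)^{−1} = inf{Σ_{j=1}^d ∫_Ω ⟨M∇u_j, ∇u_j⟩^{p/2} dx : u smooth with compact support contained in Ω ∩ B(x₀,δ) and ∫_Ω G(u(x)) dx = 1}, satisfies S_{x₀,δ}(M;G) = S(M;G). -/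
open Real MeasureTheory

/-- The quadratic form `⟨M ξ, ξ⟩` of a matrix `M` on `ℝ^n`. -/
noncomputable def quadForm {n : ℕ} (M : Matrix (Fin n) (Fin n) ℝ)
    (ξ : EuclideanSpace ℝ (Fin n)) : ℝ :=
  ∑ i, ∑ j, M i j * ξ j * ξ i

/-- Smooth functions with compact support contained in `Ω`. -/
def SmoothCpt {n : ℕ} {E : Type*} [NormedAddCommGroup E] [NormedSpace ℝ E]
    (Ω : Set (EuclideanSpace ℝ (Fin n))) (u : EuclideanSpace ℝ (Fin n) → E) : Prop :=
  ContDiff ℝ (⊤ : ℕ∞) u ∧ HasCompactSupport u ∧ tsupport u ⊆ Ω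

/-- The inverse `S(M;G)⁻¹` of the anisotropic Sobolev-type constant associated with `G`,
with test functions supported in `D ⊆ Ω` but integrating over `Ω`. -/
noncomputable def sobolevInvGLoc {n d : ℕ} (p : ℝ) (Ω D : Set (EuclideanSpace ℝ (Fin n)))
    (M : Matrix (Fin n) (Fin n) ℝ) (G : EuclideanSpace ℝ (Fin d) → ℝ) : ℝ :=
  sInf {r : ℝ | ∃ u : EuclideanSpace ℝ (Fin n) → EuclideanSpace ℝ (Fin d),
    SmoothCpt D u ∧ (∫ x in Ω, G (u x)) = 1 ∧
    r = ∑ j, ∫ x in Ω, (quadForm M (gradient (fun y => u y j) x)) ^ (p / 2)}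

lemma quadForm_zero {n : ℕ} (M : Matrix (Fin n) (Fin n) ℝ) : quadForm M 0 = 0 := by
  simp [quadForm]

lemma quadForm_smul {n : ℕ} (M : Matrix (Fin n) (Fin n) ℝ) (c : ℝ)
    (ξ : EuclideanSpace ℝ (Fin n)) : quadForm M (c • ξ) = c ^ 2 * quadForm M ξ := by
  simp only [quadForm, Finset.mul_sum, PiLp.smul_apply, smul_eq_mul]
  congr 1; ext i; congr 1; ext j; ring

lemma quadForm_nonneg {n : ℕ} {M : Matrix (Fin n) (Fin n) ℝ}
    (hMpos : ∀ ξ : EuclideanSpace ℝ (Fin n), ξ ≠ 0 → 0 < quadForm M ξ)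
    (ξ : EuclideanSpace ℝ (Fin n)) : 0 ≤ quadForm M ξ := by
  rcases eq_or_ne ξ 0 with rfl | h
  · simp [quadForm_zero]
  · exact (hMpos ξ h).le

lemma gradient_of_eventually_zero {n : ℕ} {f : EuclideanSpace ℝ (Fin n) → ℝ}
    {x : EuclideanSpace ℝ (Fin n)} (h : f =ᶠ[nhds x] 0) : gradient f x = 0 := by
  have h0 : fderiv ℝ f x = 0 := by
    rw [Filter.EventuallyEq.fderiv_eq h]
    exact fderiv_const_apply (0:ℝ)
  unfold gradient
  rw [h0]
  simp

lemma gradient_comp_affine {n : ℕ} {f : EuclideanSpace ℝ (Fin n) → ℝ}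
    (hf : ContDiff ℝ (⊤ : ℕ∞) f) (a c : ℝ) (y x : EuclideanSpace ℝ (Fin n)) :
    gradient (fun w => a * f (c • (w - y))) x = (a * c) • gradient f (c • (x - y)) := by
  set z := c • (x - y) with hz
  have h1 : HasFDerivAt (fun w : EuclideanSpace ℝ (Fin n) => c • (w - y))
      (c • ContinuousLinearMap.id ℝ (EuclideanSpace ℝ (Fin n))) x :=
    ((hasFDerivAt_id x).sub_const y).const_smul c
  have h2 : HasFDerivAt f (fderiv ℝ f z) z :=
    (hf.differentiable (by simp) z).hasFDerivAt
  have h3 := (h2.comp x h1).const_mul a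
  have h4 : a • ((fderiv ℝ f z).comp (c • ContinuousLinearMap.id ℝ (EuclideanSpace ℝ (Fin n))))
      = (a * c) • fderiv ℝ f z := by
    ext v
    simp [mul_comm, mul_assoc, mul_left_comm]
  rw [h4] at h3
  have h5 : HasFDerivAt (fun w => a * f (c • (w - y))) ((a * c) • fderiv ℝ f z) x := by
    exact h3
  unfold gradient
  rw [h5.fderiv]
  simp

/-- The localized constant `S_{x₀,δ}(M;G)` equals `S(M;G)`. -/
theorem localized_sobolev_constant_eq {n d : ℕ} (hd : 0 < d) (p : ℝ) (hp1 : 1 < p)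
    (hpn : p < n)
    (Ω : Set (EuclideanSpace ℝ (Fin n))) (hΩo : IsOpen Ω) (hΩne : Ω.Nonempty)
    (M : Matrix (Fin n) (Fin n) ℝ) (hMsymm : M.IsSymm)
    (hMpos : ∀ ξ : EuclideanSpace ℝ (Fin n), ξ ≠ 0 → 0 < quadForm M ξ)
    (G : EuclideanSpace ℝ (Fin d) → ℝ) (hGc : Continuous G)
    (hGhom : ∀ ϱ : ℝ, 0 < ϱ → ∀ s : EuclideanSpace ℝ (Fin d),
      G (ϱ • s) = ϱ ^ ((n : ℝ) * p / ((n : ℝ) - p)) * G s)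
    (hGpos : ∀ s : EuclideanSpace ℝ (Fin d), s ≠ 0 → 0 < G s)
    (x₀ : EuclideanSpace ℝ (Fin n)) (hx₀ : x₀ ∈ closure Ω) (δ : ℝ) (hδ : 0 < δ) :
    (sobolevInvGLoc p Ω (Ω ∩ Metric.ball x₀ δ) M G)⁻¹
      = (sobolevInvGLoc p Ω Ω M G)⁻¹ := by
  have hp0 : (0:ℝ) < p := lt_trans one_pos hp1
  have hn1 : (1:ℝ) < n := lt_trans hp1 hpn
  have hnp : (0:ℝ) < (n:ℝ) - p := sub_pos.mpr hpn
  set α : ℝ := (n:ℝ) * p / ((n:ℝ) - p) with hα_def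
  have hα : 0 < α := div_pos (mul_pos (by linarith) hp0) hnp
  have hG0 : G 0 = 0 := by
    have h := hGhom 2 two_pos 0
    rw [smul_zero] at h
    have h2 : (1:ℝ) < 2 ^ α :=
      Real.one_lt_rpow_iff_of_pos two_pos |>.mpr (Or.inl ⟨one_lt_two, hα⟩)
    nlinarith [h, h2]
  unfold sobolevInvGLoc
  congr 2
  ext r
  simp only [Set.mem_setOf_eq]
  constructor
  · rintro ⟨u, ⟨h1, h2, h3⟩, hI, hr⟩
    exact ⟨u, ⟨h1, h2, h3.trans Set.inter_subset_left⟩, hI, hr⟩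
  · rintro ⟨u, ⟨hu1, hu2, hu3⟩, hI, hr⟩
    -- find a small ball inside Ω ∩ ball x₀ δ
    obtain ⟨z, hz1, hz2⟩ : (Metric.ball x₀ δ ∩ Ω).Nonempty :=
      mem_closure_iff.mp hx₀ _ Metric.isOpen_ball (Metric.mem_ball_self hδ)
    obtain ⟨ε, hε, hball2⟩ :=
      Metric.isOpen_iff.mp (hΩo.inter Metric.isOpen_ball) z ⟨hz2, hz1⟩
    -- bound the support of u
    obtain ⟨R0, hR0⟩ := hu2.isBounded.subset_closedBall 0
    set R : ℝ := max R0 1 with hR_def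
    have hR : (0:ℝ) < R := lt_of_lt_of_le one_pos (le_max_right _ _)
    have hsupp : tsupport u ⊆ Metric.closedBall 0 R :=
      hR0.trans (Metric.closedBall_subset_closedBall (le_max_left _ _))
    set c : ℝ := 2 * R / ε with hc_def
    have hc0 : (0:ℝ) < c := div_pos (by linarith) hε
    set k : ℝ := ((n:ℝ) - p) / p with hk_def
    set a : ℝ := c ^ k with ha_def
    have ha : (0:ℝ) < a := Real.rpow_pos_of_pos hc0 k
    set v : EuclideanSpace ℝ (Fin n) → EuclideanSpace ℝ (Fin d) :=
      fun x => a • u (c • (x - z)) with hv_def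
    -- support of v
    have hsv : tsupport v ⊆ Metric.closedBall z (ε / 2) := by
      apply closure_minimal ?_ Metric.isClosed_closedBall
      intro x hx
      have hux : u (c • (x - z)) ≠ 0 := by
        intro h0
        apply hx
        simp [hv_def, h0]
      have hmem : c • (x - z) ∈ tsupport u := subset_tsupport _ hux
      have hle := hsupp hmem
      rw [Metric.mem_closedBall, dist_zero_right, norm_smul,
        Real.norm_of_nonneg hc0.le] at hle
      rw [Metric.mem_closedBall, dist_eq_norm]
      have hcle : ‖x - z‖ ≤ R / c := by
        rw [le_div_iff₀ hc0]; linarith [hle]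
      have : R / c = ε / 2 := by
        rw [hc_def]; field_simp
      linarith [hcle, this.le, this.ge]
    have hsv2 : tsupport v ⊆ Ω ∩ Metric.ball x₀ δ :=
      hsv.trans ((Metric.closedBall_subset_ball (by linarith)).trans hball2)
    have hsvΩ : tsupport v ⊆ Ω := hsv2.trans Set.inter_subset_left
    have hv1 : ContDiff ℝ (⊤ : ℕ∞) v :=
      (hu1.comp ((contDiff_id.sub contDiff_const).const_smul c)).const_smul a
    have hv2 : HasCompactSupport v :=
      HasCompactSupport.of_support_subset_isCompact (isCompact_closedBall z (ε/2))
        ((subset_tsupport v).trans hsv)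
    -- exponent facts
    have hcn : (c:ℝ) ^ (n:ℕ) = c ^ ((n:ℕ):ℝ) := (Real.rpow_natCast c n).symm
    have hcnpos : (0:ℝ) < c ^ ((n:ℕ):ℝ) := Real.rpow_pos_of_pos hc0 _
    have hfac1 : a ^ α = c ^ ((n:ℕ):ℝ) := by
      rw [ha_def, ← Real.rpow_mul hc0.le]
      congr 1
      rw [hk_def, hα_def]
      field_simp
    have hfacE : (a * c) ^ p = c ^ ((n:ℕ):ℝ) := by
      have h1 : a * c = c ^ (k + 1) := by
        rw [ha_def, Real.rpow_add hc0, Real.rpow_one]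
      rw [h1, ← Real.rpow_mul hc0.le]
      congr 1
      rw [hk_def]
      field_simp
      ring
    -- constraint integral
    have hIv : (∫ x in Ω, G (v x)) = 1 := by
      have e1 : (∫ x in Ω, G (v x)) = ∫ x, G (v x) := by
        apply setIntegral_eq_integral_of_forall_compl_eq_zero
        intro x hx
        have : v x = 0 := image_eq_zero_of_notMem_tsupport (fun h => hx (hsvΩ h))
        rw [this, hG0]
      have e2 : (∫ x, G (v x)) = a ^ α * ∫ x, G (u (c • (x - z))) := by
        simp_rw [hv_def, hGhom a ha]
        exact integral_const_mul _ _
      have e3 : (∫ x, G (u (c • (x - z)))) = ((c:ℝ) ^ (n:ℕ))⁻¹ • ∫ x, G (u x) := by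
        rw [show (fun x => G (u (c • (x - z)))) = (fun x => (fun w => G (u (c • w))) (x - z))
          from rfl]
        rw [integral_sub_right_eq_self (fun w => G (u (c • w))) z]
        rw [Measure.integral_comp_smul_of_nonneg volume (fun w => G (u w)) c (hR := hc0.le)]
        simp [finrank_euclideanSpace_fin]
      have e4 : (∫ x, G (u x)) = ∫ x in Ω, G (u x) := by
        symm
        apply setIntegral_eq_integral_of_forall_compl_eq_zero
        intro x hx
        have : u x = 0 := image_eq_zero_of_notMem_tsupport (fun h => hx (hu3 h))
        rw [this, hG0]
      rw [e1, e2, e3, e4, hI, smul_eq_mul, mul_one, hfac1, hcn]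
      exact mul_inv_cancel₀ hcnpos.ne'
    -- energy integrals
    have hEnergy : ∀ j : Fin d,
        (∫ x in Ω, (quadForm M (gradient (fun y => v y j) x)) ^ (p / 2))
          = ∫ x in Ω, (quadForm M (gradient (fun y => u y j) x)) ^ (p / 2) := by
      intro j
      have hfj : ContDiff ℝ (⊤ : ℕ∞) (fun w => u w j) := by
        have : (fun w => u w j) = fun w => (EuclideanSpace.proj j : EuclideanSpace ℝ (Fin d) →L[ℝ] ℝ) (u w) := rfl
        rw [this]
        exact (EuclideanSpace.proj j).contDiff.comp hu1
      have hgrad : ∀ x, gradient (fun y => v y j) x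
          = (a * c) • gradient (fun w => u w j) (c • (x - z)) := by
        intro x
        have hvj : (fun y => v y j) = fun w => a * (fun w' => u w' j) (c • (w - z)) := by
          funext w
          simp [hv_def]
        rw [hvj, gradient_comp_affine hfj a c z x]
      have hpt : ∀ x, (quadForm M (gradient (fun y => v y j) x)) ^ (p / 2)
          = (a * c) ^ p * (quadForm M (gradient (fun w => u w j) (c • (x - z)))) ^ (p / 2) := by
        intro x
        rw [hgrad x, quadForm_smul]
        rw [Real.mul_rpow (sq_nonneg _) (quadForm_nonneg hMpos _)]
        congr 1
        rw [← Real.rpow_natCast (a * c) 2, ← Real.rpow_mul (mul_pos ha hc0).le]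
        congr 1
        push_cast
        ring
      have hzero : ∀ (w : EuclideanSpace ℝ (Fin n) → EuclideanSpace ℝ (Fin d)),
          tsupport w ⊆ Ω → ∀ x ∉ Ω,
          (quadForm M (gradient (fun y => w y j) x)) ^ (p / 2) = 0 := by
        intro w hw x hx
        have hxn : x ∉ tsupport w := fun h => hx (hw h)
        have hev : (fun y => w y j) =ᶠ[nhds x] 0 := by
          have : ∀ᶠ y in nhds x, w y = 0 := by
            have hopen : IsOpen (tsupport w)ᶜ := (isClosed_tsupport w).isOpen_compl
            filter_upwards [hopen.mem_nhds hxn] with y hy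
            exact image_eq_zero_of_notMem_tsupport hy
          filter_upwards [this] with y hy
          simp [hy]
        rw [gradient_of_eventually_zero hev, quadForm_zero,
          Real.zero_rpow (by positivity)]
      have e1 : (∫ x in Ω, (quadForm M (gradient (fun y => v y j) x)) ^ (p / 2))
          = ∫ x, (quadForm M (gradient (fun y => v y j) x)) ^ (p / 2) :=
        setIntegral_eq_integral_of_forall_compl_eq_zero (hzero v hsvΩ)
      have e4 : (∫ x, (quadForm M (gradient (fun y => u y j) x)) ^ (p / 2))
          = ∫ x in Ω, (quadForm M (gradient (fun y => u y j) x)) ^ (p / 2) :=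
        (setIntegral_eq_integral_of_forall_compl_eq_zero (hzero u hu3)).symm
      rw [e1]
      simp_rw [hpt]
      rw [integral_const_mul]
      rw [show (fun x => (quadForm M (gradient (fun w => u w j) (c • (x - z)))) ^ (p / 2))
          = (fun x => (fun w => (quadForm M (gradient (fun w' => u w' j) (c • w))) ^ (p / 2)) (x - z)) from rfl]
      rw [integral_sub_right_eq_self
        (fun w => (quadForm M (gradient (fun w' => u w' j) (c • w))) ^ (p / 2)) z]
      rw [Measure.integral_comp_smul_of_nonneg volume
        (fun w => (quadForm M (gradient (fun w' => u w' j) w)) ^ (p / 2)) c (hR := hc0.le)]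
      rw [e4]
      simp only [finrank_euclideanSpace_fin, smul_eq_mul]
      rw [← mul_assoc, hfacE, hcn, mul_inv_cancel₀ hcnpos.ne', one_mul]
    exact ⟨v, ⟨hv1, hv2, hsv2⟩, hIv, by rw [hr]; exact (Finset.sum_congr rfl fun j _ => (hEnergy j)).symm⟩
end

section
/- Let p ≥ 2, let Ω ⊂ ℝ^n be a bounded open set, and let A : closure(Ω) → n×n real symmetric matrices be continuous and uniformly positive definite. Then there exists C > 0 such that for all x ∈ closure(Ω) and all ξ, ζ ∈ ℝ^n, (⟨A(x)ξ,ξ⟩^{(p−2)/2} A(x)ξ − ⟨A(x)ζ,ζ⟩^{(p−2)/2} A(x)ζ) · (ξ − ζ) ≥ C·|ξ − ζ|^p. -/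
open Real

/-!
Factor `A(x) = SᵀS`. Then `⟨A(x)ξ, ζ⟩ = ⟨Sξ, Sζ⟩`, so with `u = Sξ`, `w = Sζ` the left-hand side is
`⟨|u|^{p-2} u - |w|^{p-2} w, u - w⟩`, which equals
`(|u|^{p-2} + |w|^{p-2})/2 · |u - w|² + (|u|^{p-2} - |w|^{p-2})(|u|² - |w|²)/2`.
The second term is nonnegative by monotonicity of `t ↦ t^{p-2}`, and
`|u - w|^{p-2} ≤ (|u| + |w|)^{p-2} ≤ 2^{p-2}(|u|^{p-2} + |w|^{p-2})` bounds the first from below by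
`2^{1-p}|u - w|^p`. Finally `|u - w|² = ⟨A(x)(ξ - ζ), ξ - ζ⟩ ≥ τ|ξ - ζ|²`, giving
`C = 2^{1-p} τ^{p/2}`.
-/

open Matrix
open scoped RealInnerProductSpace MatrixOrder

lemma sq_rpow_div_two {x : ℝ} (hx : 0 ≤ x) (y : ℝ) : (x ^ 2) ^ (y / 2) = x ^ y := by
  rw [rpow_div_two_eq_sqrt y (sq_nonneg x), sqrt_sq hx]

lemma rpow_sub_rpow_mul_sq_sub_sq_nonneg {a b q : ℝ} (ha : 0 ≤ a) (hb : 0 ≤ b) (hq : 0 ≤ q) :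
    0 ≤ (a ^ q - b ^ q) * (a ^ 2 - b ^ 2) := by
  rcases le_total a b with h | h
  · exact mul_nonneg_of_nonpos_of_nonpos (sub_nonpos.2 (rpow_le_rpow ha h hq))
      (sub_nonpos.2 (pow_le_pow_left₀ ha h 2))
  · exact mul_nonneg (sub_nonneg.2 (rpow_le_rpow hb h hq)) (sub_nonneg.2 (pow_le_pow_left₀ hb h 2))

lemma rpow_le_two_rpow_mul_rpow_add_rpow {a b c q : ℝ} (ha : 0 ≤ a) (hb : 0 ≤ b) (hc : 0 ≤ c)
    (hq : 0 ≤ q) (hcab : c ≤ a + b) : c ^ q ≤ 2 ^ q * (a ^ q + b ^ q) :=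
  calc c ^ q ≤ (2 * max a b) ^ q := rpow_le_rpow hc (by grind) hq
    _ = 2 ^ q * max a b ^ q := mul_rpow zero_le_two (le_max_of_le_left ha)
    _ ≤ 2 ^ q * (a ^ q + b ^ q) := by
      gcongr
      rcases max_cases a b with ⟨h, -⟩ | ⟨h, -⟩ <;> rw [h] <;>
        linarith [rpow_nonneg ha q, rpow_nonneg hb q]

section InnerProductSpace

variable {E : Type*} [NormedAddCommGroup E] [InnerProductSpace ℝ E]

lemma inner_smul_sub_smul_sub_eq (r s : ℝ) (u w : E) :
    ⟪r • u - s • w, u - w⟫ = (r + s) / 2 * ‖u - w‖ ^ 2 + (r - s) / 2 * (‖u‖ ^ 2 - ‖w‖ ^ 2) := by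
  rw [norm_sub_sq_real]
  simp only [inner_sub_left, inner_sub_right, real_inner_smul_left, real_inner_self_eq_norm_sq,
    real_inner_comm u w]
  ring

theorem two_rpow_one_sub_mul_norm_sub_rpow_le_inner {p : ℝ} (hp : 2 ≤ p) (u w : E) :
    2 ^ (1 - p) * ‖u - w‖ ^ p ≤ ⟪‖u‖ ^ (p - 2) • u - ‖w‖ ^ (p - 2) • w, u - w⟫ := by
  have hq : 0 ≤ p - 2 := by linarith
  have hmono := rpow_sub_rpow_mul_sq_sub_sq_nonneg (norm_nonneg u) (norm_nonneg w) hq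
  have hbound := rpow_le_two_rpow_mul_rpow_add_rpow (norm_nonneg u) (norm_nonneg w)
    (norm_nonneg (u - w)) hq (norm_sub_le u w)
  have hsplit : ‖u - w‖ ^ p = ‖u - w‖ ^ (p - 2) * ‖u - w‖ ^ 2 := by
    rw [← rpow_add_natCast' (norm_nonneg _) (by norm_num; linarith)]; norm_num
  have htwo : (2 : ℝ) ^ (1 - p) * 2 ^ (p - 2) = 1 / 2 := by
    rw [← rpow_add zero_lt_two]; norm_num
  calc 2 ^ (1 - p) * ‖u - w‖ ^ p
      ≤ 2 ^ (1 - p) * (2 ^ (p - 2) * (‖u‖ ^ (p - 2) + ‖w‖ ^ (p - 2))) * ‖u - w‖ ^ 2 := by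
        rw [hsplit, ← mul_assoc]; gcongr
    _ = (‖u‖ ^ (p - 2) + ‖w‖ ^ (p - 2)) / 2 * ‖u - w‖ ^ 2 := by
        rw [← mul_assoc, htwo]; ring
    _ ≤ ⟪‖u‖ ^ (p - 2) • u - ‖w‖ ^ (p - 2) • w, u - w⟫ := by
        rw [inner_smul_sub_smul_sub_eq]; linarith

variable {F : Type*} [NormedAddCommGroup F] [InnerProductSpace ℝ F]

theorem two_rpow_one_sub_mul_rpow_mul_norm_sub_rpow_le_inner_of_inner_eq
    {p τ : ℝ} (hp : 2 ≤ p) (hτ : 0 ≤ τ) (B : E → E) (T : E →ₗ[ℝ] F)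
    (hB : ∀ x y, ⟪B x, y⟫ = ⟪T x, T y⟫) (hT : ∀ x, τ * ‖x‖ ^ 2 ≤ ‖T x‖ ^ 2) (ξ ζ : E) :
    2 ^ (1 - p) * τ ^ (p / 2) * ‖ξ - ζ‖ ^ p ≤
      ⟪⟪B ξ, ξ⟫ ^ ((p - 2) / 2) • B ξ - ⟪B ζ, ζ⟫ ^ ((p - 2) / 2) • B ζ, ξ - ζ⟫ := by
  have hlow : τ ^ (p / 2) * ‖ξ - ζ‖ ^ p ≤ ‖T ξ - T ζ‖ ^ p :=
    calc τ ^ (p / 2) * ‖ξ - ζ‖ ^ p = (τ * ‖ξ - ζ‖ ^ 2) ^ (p / 2) := by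
          rw [mul_rpow hτ (sq_nonneg _), sq_rpow_div_two (norm_nonneg _)]
      _ ≤ (‖T ξ - T ζ‖ ^ 2) ^ (p / 2) := by rw [← map_sub]; gcongr; exact hT _
      _ = ‖T ξ - T ζ‖ ^ p := sq_rpow_div_two (norm_nonneg _) p
  have hrhs : ⟪⟪B ξ, ξ⟫ ^ ((p - 2) / 2) • B ξ - ⟪B ζ, ζ⟫ ^ ((p - 2) / 2) • B ζ, ξ - ζ⟫ =
      ⟪‖T ξ‖ ^ (p - 2) • T ξ - ‖T ζ‖ ^ (p - 2) • T ζ, T ξ - T ζ⟫ := by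
    simp only [hB, real_inner_self_eq_norm_sq, sq_rpow_div_two (norm_nonneg _), inner_sub_left,
      inner_sub_right, real_inner_smul_left]
  rw [hrhs, mul_assoc]
  calc 2 ^ (1 - p) * (τ ^ (p / 2) * ‖ξ - ζ‖ ^ p) ≤ 2 ^ (1 - p) * ‖T ξ - T ζ‖ ^ p := by gcongr
    _ ≤ _ := two_rpow_one_sub_mul_norm_sub_rpow_le_inner hp _ _

end InnerProductSpace

section Matrix

variable {n : ℕ}

lemma quadForm_eq_inner_toEuclideanCLM (M : Matrix (Fin n) (Fin n) ℝ)
    (ξ : EuclideanSpace ℝ (Fin n)) :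
    quadForm M ξ = ⟪toEuclideanCLM (𝕜 := ℝ) M ξ, ξ⟫ := by
  rw [real_inner_comm, inner_toEuclideanCLM]
  simp [quadForm, dotProduct, mulVec, Finset.mul_sum, mul_comm, mul_left_comm]

lemma Matrix.sum_mul_mulVec_sub_mul_eq_inner_toEuclideanCLM (M : Matrix (Fin n) (Fin n) ℝ)
    (r s : ℝ) (ξ ζ : EuclideanSpace ℝ (Fin n)) :
    ∑ i, (r * (∑ j, M i j * ξ j) - s * (∑ j, M i j * ζ j)) * (ξ i - ζ i) =
      ⟪r • toEuclideanCLM (𝕜 := ℝ) M ξ - s • toEuclideanCLM (𝕜 := ℝ) M ζ, ξ - ζ⟫ := by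
  simp [PiLp.inner_apply, mulVec, dotProduct, mul_comm]

lemma Matrix.PosSemidef.exists_inner_toEuclideanCLM_eq {M : Matrix (Fin n) (Fin n) ℝ}
    (hM : M.PosSemidef) : ∃ T : EuclideanSpace ℝ (Fin n) →L[ℝ] EuclideanSpace ℝ (Fin n),
      ∀ x y, ⟪toEuclideanCLM (𝕜 := ℝ) M x, y⟫ = ⟪T x, T y⟫ := by
  obtain ⟨S, rfl⟩ := CStarAlgebra.nonneg_iff_eq_star_mul_self.mp hM.nonneg
  refine ⟨toEuclideanCLM (𝕜 := ℝ) S, fun x y => ?_⟩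
  rw [map_mul, map_star, ContinuousLinearMap.star_eq_adjoint, mul_apply_eq_comp,
    ContinuousLinearMap.adjoint_inner_left]

lemma Matrix.IsSymm.posSemidef_of_quadForm_nonneg {M : Matrix (Fin n) (Fin n) ℝ} (hM : M.IsSymm)
    (hq : ∀ ξ, 0 ≤ quadForm M ξ) : M.PosSemidef := by
  refine .of_dotProduct_mulVec_nonneg (isHermitian_iff_isSymm.2 hM) fun x => ?_
  have hx := hq (WithLp.toLp 2 x)
  rwa [quadForm_eq_inner_toEuclideanCLM, real_inner_comm, inner_toEuclideanCLM,
    ← star_trivial x] at hx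

end Matrix

theorem simon_type_inequality_p_ge_two_general {n : ℕ} (p : ℝ) (hp : 2 ≤ p)
    (Ω : Set (EuclideanSpace ℝ (Fin n)))
    (A : EuclideanSpace ℝ (Fin n) → Matrix (Fin n) (Fin n) ℝ)
    (hAsymm : ∀ x ∈ closure Ω, (A x).IsSymm)
    (τ : ℝ) (hτ : 0 < τ)
    (hApos : ∀ x ∈ closure Ω, ∀ ξ : EuclideanSpace ℝ (Fin n),
      τ * ‖ξ‖ ^ 2 ≤ quadForm (A x) ξ) :
    ∃ C > 0, ∀ x ∈ closure Ω, ∀ ξ ζ : EuclideanSpace ℝ (Fin n),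
      C * ‖ξ - ζ‖ ^ p ≤
        ∑ i, ((quadForm (A x) ξ) ^ ((p - 2) / 2) * (∑ j, A x i j * ξ j)
            - (quadForm (A x) ζ) ^ ((p - 2) / 2) * (∑ j, A x i j * ζ j))
          * (ξ i - ζ i) := by
  refine ⟨2 ^ (1 - p) * τ ^ (p / 2), by positivity, fun x hx ξ ζ => ?_⟩
  have hpsd : (A x).PosSemidef := (hAsymm x hx).posSemidef_of_quadForm_nonneg
    fun η => (mul_nonneg hτ.le (sq_nonneg ‖η‖)).trans (hApos x hx η)
  obtain ⟨T, hT⟩ := hpsd.exists_inner_toEuclideanCLM_eq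
  have hcoercive (η : EuclideanSpace ℝ (Fin n)) : τ * ‖η‖ ^ 2 ≤ ‖T η‖ ^ 2 := by
    simpa only [quadForm_eq_inner_toEuclideanCLM, hT, real_inner_self_eq_norm_sq] using hApos x hx η
  rw [sum_mul_mulVec_sub_mul_eq_inner_toEuclideanCLM, quadForm_eq_inner_toEuclideanCLM,
    quadForm_eq_inner_toEuclideanCLM]
  exact two_rpow_one_sub_mul_rpow_mul_norm_sub_rpow_le_inner_of_inner_eq hp hτ.le _
    (T : EuclideanSpace ℝ (Fin n) →ₗ[ℝ] EuclideanSpace ℝ (Fin n)) hT hcoercive ξ ζ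

/-- Strong monotonicity of the anisotropic `p`-Laplacian map for `p ≥ 2`:
`(⟨Aξ,ξ⟩^{(p-2)/2} Aξ − ⟨Aζ,ζ⟩^{(p-2)/2} Aζ) · (ξ − ζ) ≥ C |ξ − ζ|^p`. -/
theorem simon_type_inequality_p_ge_two {n : ℕ} (p : ℝ) (hp : 2 ≤ p)
    (Ω : Set (EuclideanSpace ℝ (Fin n))) (hΩo : IsOpen Ω)
    (hΩb : Bornology.IsBounded Ω)
    (A : EuclideanSpace ℝ (Fin n) → Matrix (Fin n) (Fin n) ℝ)
    (hAc : ContinuousOn A (closure Ω))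
    (hAsymm : ∀ x ∈ closure Ω, (A x).IsSymm)
    (τ : ℝ) (hτ : 0 < τ)
    (hApos : ∀ x ∈ closure Ω, ∀ ξ : EuclideanSpace ℝ (Fin n),
      τ * ‖ξ‖ ^ 2 ≤ quadForm (A x) ξ) :
    ∃ C > 0, ∀ x ∈ closure Ω, ∀ ξ ζ : EuclideanSpace ℝ (Fin n),
      C * ‖ξ - ζ‖ ^ p ≤
        ∑ i, ((quadForm (A x) ξ) ^ ((p - 2) / 2) * (∑ j, A x i j * ξ j)
            - (quadForm (A x) ζ) ^ ((p - 2) / 2) * (∑ j, A x i j * ζ j))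
          * (ξ i - ζ i) :=
  simon_type_inequality_p_ge_two_general p hp Ω A hAsymm τ hτ hApos
end

section
/- Let 1 < p ≤ 2, let Ω ⊂ ℝ^n be a bounded open set, and let A : closure(Ω) → n×n real symmetric matrices be continuous and uniformly positive definite. Then there exists C > 0 such that for all x ∈ closure(Ω) and all ξ, ζ ∈ ℝ^n with (ξ,ζ) ≠ (0,0), (⟨A(x)ξ,ξ⟩^{(p−2)/2} A(x)ξ − ⟨A(x)ζ,ζ⟩^{(p−2)/2} A(x)ζ) · (ξ − ζ) ≥ C·|ξ − ζ|²·(|ξ| + |ζ|)^{p−2}. -/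
open Real

private lemma rpow_succ' {α q : ℝ} (hα : 0 ≤ α) (hq : q + 1 ≠ 0) :
    α ^ q * α = α ^ (q + 1) := by
  rcases hα.eq_or_lt with h | h
  · rw [← h, Real.zero_rpow hq, mul_zero]
  · rw [Real.rpow_add h, Real.rpow_one]

private lemma sq_rpow_half {α : ℝ} (hα : 0 ≤ α) (r : ℝ) : (α ^ 2) ^ (r / 2) = α ^ r := by
  rw [← Real.rpow_two, ← Real.rpow_mul hα]
  congr 1
  ring

private lemma bern {s α β : ℝ} (hs0 : 0 < s) (hs1 : s ≤ 1) (hβ : 0 ≤ β) (hβα : β ≤ α)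
    (hα : 0 < α) : s * (α ^ (s - 1) * (α - β)) ≤ α ^ s - β ^ s := by
  have h1 : (-1 : ℝ) ≤ β / α - 1 := by
    have : 0 ≤ β / α := div_nonneg hβ hα.le
    linarith
  have h := rpow_one_add_le_one_add_mul_self h1 hs0.le hs1
  have e : (1 : ℝ) + (β / α - 1) = β / α := by ring
  rw [e, Real.div_rpow hβ hα.le] at h
  have hαs : (0 : ℝ) < α ^ s := Real.rpow_pos_of_pos hα s
  have h2 : β ^ s ≤ (1 + s * (β / α - 1)) * α ^ s := by
    have := mul_le_mul_of_nonneg_right h hαs.le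
    rwa [div_mul_cancel₀ _ hαs.ne'] at this
  have hu : α ^ (s - 1) * α = α ^ s := by
    rw [rpow_succ' hα.le (by intro hc; nlinarith)]
    norm_num
  have e2 : (1 + s * (β / α - 1)) * α ^ s = α ^ s + s * (α ^ (s - 1) * β - α ^ s) := by
    rw [← hu]; field_simp
  rw [e2] at h2
  rw [← hu] at h2 ⊢
  nlinarith [h2]

private lemma scalarAux {p : ℝ} (hp1 : 1 < p) (hp2 : p ≤ 2) {α β t : ℝ} (hβ : 0 ≤ β)
    (hβα : β ≤ α) (hαβ : 0 < α + β) (ht : |t| ≤ α * β) :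
    (p - 1) * ((α ^ 2 + β ^ 2 - 2 * t) * (α + β) ^ (p - 2)) ≤
      α ^ p + β ^ p - (α ^ (p - 2) + β ^ (p - 2)) * t := by
  have hα : 0 < α := by linarith
  have hp1' : p - 2 + 1 ≠ 0 := by intro h; linarith
  have hp0' : p - 1 + 1 ≠ 0 := by intro h; linarith
  have hune : α ^ (p - 2) * α = α ^ (p - 1) := by
    rw [rpow_succ' hα.le hp1']; congr 1; ring
  have hvne : β ^ (p - 2) * β = β ^ (p - 1) := by
    rw [rpow_succ' hβ hp1']; congr 1; ring
  have hwne : (α + β) ^ (p - 2) * (α + β) = (α + β) ^ (p - 1) := by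
    rw [rpow_succ' hαβ.le hp1']; congr 1; ring
  have hαp : α ^ p = α ^ (p - 2) * α * α := by
    rw [hune, rpow_succ' hα.le hp0']; congr 1; ring
  have hβp : β ^ p = β ^ (p - 2) * β * β := by
    rw [hvne, rpow_succ' hβ hp0']; congr 1; ring
  -- endpoint B ingredient
  have hb := bern (s := p - 1) (by linarith) (by linarith) hβ hβα hα
  have heb : p - 1 - 1 = p - 2 := by ring
  rw [heb] at hb
  rw [← hune, ← hvne] at hb
  -- hb : (p-1) * (α^(p-2) * (α - β)) ≤ α^(p-2)*α - β^(p-2)*β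
  -- endpoint C ingredient: subadditivity
  have hsub : (α + β) ^ (p - 1) ≤ α ^ (p - 1) + β ^ (p - 1) := by
    have h0 : (0:ℝ) ≤ p - 1 := by linarith
    have h1 : p - 1 ≤ 1 := by linarith
    lift α to NNReal using hα.le with a
    lift β to NNReal using hβ with b
    have := NNReal.rpow_add_le_add_rpow a b h0 h1
    push_cast [← NNReal.coe_rpow] at this ⊢
    exact_mod_cast this
  have hc : (α + β) ^ (p - 2) * (α + β) ≤ α ^ (p - 2) * α + β ^ (p - 2) * β := by
    rw [hwne, hune, hvne]; exact hsub
  -- nonnegativity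
  have hu0 : 0 ≤ α ^ (p - 2) := Real.rpow_nonneg hα.le _
  have hv0 : 0 ≤ β ^ (p - 2) := Real.rpow_nonneg hβ _
  have hw0 : 0 ≤ (α + β) ^ (p - 2) := Real.rpow_nonneg hαβ.le _
  have hwu : (α + β) ^ (p - 2) ≤ α ^ (p - 2) :=
    Real.rpow_le_rpow_of_nonpos hα (by linarith) (by linarith)
  have ht1 : t ≤ α * β := (abs_le.mp ht).2
  have ht2 : -(α * β) ≤ t := (abs_le.mp ht).1
  have hs0 : (0:ℝ) < p - 1 := by linarith
  rw [hαp, hβp]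
  have hB : (p - 1) * ((α - β) ^ 2 * (α + β) ^ (p - 2)) ≤
      (α ^ (p - 2) * α - β ^ (p - 2) * β) * (α - β) := by
    have h1 : (p - 1) * ((α - β) ^ 2 * (α + β) ^ (p - 2)) ≤
        (p - 1) * ((α - β) ^ 2 * (α ^ (p - 2))) := by
      apply mul_le_mul_of_nonneg_left _ hs0.le
      apply mul_le_mul_of_nonneg_left hwu (by positivity)
    have h2 := mul_le_mul_of_nonneg_right hb (by linarith : (0:ℝ) ≤ α - β)
    nlinarith [h1, h2]
  have hC : (p - 1) * ((α + β) ^ 2 * (α + β) ^ (p - 2)) ≤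
      (α ^ (p - 2) * α + β ^ (p - 2) * β) * (α + β) := by
    have h2 := mul_le_mul_of_nonneg_right hc (by linarith : (0:ℝ) ≤ α + β)
    have h3 : (p - 1) * ((α + β) ^ 2 * (α + β) ^ (p - 2)) ≤
        1 * ((α + β) ^ 2 * (α + β) ^ (p - 2)) := by
      apply mul_le_mul_of_nonneg_right (by linarith) (by positivity)
    nlinarith [h2, h3]
  by_cases hV : 2 * (p - 1) * (α + β) ^ (p - 2) ≤ α ^ (p - 2) + β ^ (p - 2)
  · have hprod : 2 * (p - 1) * (α + β) ^ (p - 2) * (α * β - t) ≤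
        (α ^ (p - 2) + β ^ (p - 2)) * (α * β - t) :=
      mul_le_mul_of_nonneg_right hV (by linarith)
    linarith [hB, hprod]
  · push_neg at hV
    have hprod : (α ^ (p - 2) + β ^ (p - 2)) * (α * β + t) ≤
        2 * (p - 1) * (α + β) ^ (p - 2) * (α * β + t) :=
      mul_le_mul_of_nonneg_right hV.le (by linarith)
    linarith [hC, hprod]

private lemma scalarFinal {p : ℝ} (hp1 : 1 < p) (hp2 : p ≤ 2) {α β t : ℝ} (hα : 0 ≤ α)
    (hβ : 0 ≤ β) (hαβ : 0 < α + β) (ht : |t| ≤ α * β) :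
    (p - 1) * ((α ^ 2 + β ^ 2 - 2 * t) * (α + β) ^ (p - 2)) ≤
      α ^ p + β ^ p - (α ^ (p - 2) + β ^ (p - 2)) * t := by
  rcases le_total β α with h | h
  · exact scalarAux hp1 hp2 hβ h hαβ ht
  · have := scalarAux hp1 hp2 (α := β) (β := α) (t := t) hα h (by linarith)
      (by rwa [mul_comm])
    rw [add_comm β α] at this
    linarith [this]

/-- Strong monotonicity of the anisotropic `p`-Laplacian map for
`1 < p ≤ 2`: for `(ξ,ζ) ≠ (0,0)`,
`(⟨Aξ,ξ⟩^{(p-2)/2} Aξ − ⟨Aζ,ζ⟩^{(p-2)/2} Aζ) · (ξ − ζ) ≥ C |ξ − ζ|² (|ξ|+|ζ|)^{p-2}`.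
(Here, by the conventions of real powers, `⟨Aξ,ξ⟩^{(p-2)/2} Aξ` vanishes for `ξ = 0`.) -/
theorem simon_type_inequality_p_le_two {n : ℕ} (p : ℝ) (hp1 : 1 < p) (hp2 : p ≤ 2)
    (Ω : Set (EuclideanSpace ℝ (Fin n))) (hΩo : IsOpen Ω)
    (hΩb : Bornology.IsBounded Ω)
    (A : EuclideanSpace ℝ (Fin n) → Matrix (Fin n) (Fin n) ℝ)
    (hAc : ContinuousOn A (closure Ω))
    (hAsymm : ∀ x ∈ closure Ω, (A x).IsSymm)
    (τ : ℝ) (hτ : 0 < τ)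
    (hApos : ∀ x ∈ closure Ω, ∀ ξ : EuclideanSpace ℝ (Fin n),
      τ * ‖ξ‖ ^ 2 ≤ quadForm (A x) ξ) :
    ∃ C > 0, ∀ x ∈ closure Ω, ∀ ξ ζ : EuclideanSpace ℝ (Fin n), ¬(ξ = 0 ∧ ζ = 0) →
      C * (‖ξ - ζ‖ ^ 2 * (‖ξ‖ + ‖ζ‖) ^ (p - 2)) ≤
        ∑ i, ((quadForm (A x) ξ) ^ ((p - 2) / 2) * (∑ j, A x i j * ξ j)
            - (quadForm (A x) ζ) ^ ((p - 2) / 2) * (∑ j, A x i j * ζ j))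
          * (ξ i - ζ i) := by
  classical
  rcases (closure Ω).eq_empty_or_nonempty with hKe | hKne
  · exact ⟨1, one_pos, fun x hx => by rw [hKe] at hx; exact absurd hx (Set.notMem_empty x)⟩
  have hKc : IsCompact (closure Ω) := hΩb.isCompact_closure
  have hgc : ContinuousOn (fun x => ∑ i, ∑ j, |A x i j|) (closure Ω) := by
    apply continuousOn_finset_sum
    intro i _
    apply continuousOn_finset_sum
    intro j _
    exact ((continuous_apply j).comp_continuousOn
      ((continuous_apply i).comp_continuousOn hAc)).abs
  obtain ⟨x₀, hx₀, hmax⟩ := hKc.exists_isMaxOn hKne hgc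
  set Λ : ℝ := max (∑ i, ∑ j, |A x₀ i j|) τ with hΛdef
  have hΛ : 0 < Λ := lt_of_lt_of_le hτ (le_max_right _ _)
  have hbound : ∀ x ∈ closure Ω, ∀ v : EuclideanSpace ℝ (Fin n),
      quadForm (A x) v ≤ Λ * ‖v‖ ^ 2 := by
    intro x hx v
    have hcoord : ∀ i, |v i| ≤ ‖v‖ := by
      intro i
      have h1 : |v i| = Real.sqrt (‖v i‖ ^ 2) := by
        rw [Real.sqrt_sq (norm_nonneg _), Real.norm_eq_abs]
      rw [EuclideanSpace.norm_eq, h1]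
      apply Real.sqrt_le_sqrt
      exact Finset.single_le_sum (f := fun j => ‖v j‖ ^ 2)
        (fun j _ => by positivity) (Finset.mem_univ i)
    have h2 : quadForm (A x) v ≤ (∑ i, ∑ j, |A x i j|) * ‖v‖ ^ 2 := by
      unfold quadForm
      rw [Finset.sum_mul]
      apply Finset.sum_le_sum
      intro i _
      rw [Finset.sum_mul]
      apply Finset.sum_le_sum
      intro j _
      calc A x i j * v j * v i ≤ |A x i j * v j * v i| := le_abs_self _
        _ = |A x i j| * |v j| * |v i| := by rw [abs_mul, abs_mul]
        _ ≤ |A x i j| * ‖v‖ * ‖v‖ := by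
            apply mul_le_mul (mul_le_mul le_rfl (hcoord j) (abs_nonneg _) (abs_nonneg _))
              (hcoord i) (abs_nonneg _) (by positivity)
        _ = |A x i j| * ‖v‖ ^ 2 := by ring
    have h3 : (∑ i, ∑ j, |A x i j|) ≤ Λ := le_trans (hmax hx) (le_max_left _ _)
    have := mul_le_mul_of_nonneg_right h3 (by positivity : (0:ℝ) ≤ ‖v‖ ^ 2)
    linarith
  refine ⟨(p - 1) * τ * Λ ^ ((p - 2) / 2),
    mul_pos (mul_pos (by linarith) hτ) (Real.rpow_pos_of_pos hΛ _), ?_⟩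
  intro x hx ξ ζ hne
  have hsym : ∀ i j, A x j i = A x i j := fun i j => (hAsymm x hx).apply i j
  have hS : ∀ v w : EuclideanSpace ℝ (Fin n),
      (∑ i, ∑ j, A x i j * v j * w i) = ∑ i, ∑ j, A x i j * w j * v i := by
    intro v w
    rw [Finset.sum_comm]
    exact Finset.sum_congr rfl fun a _ => Finset.sum_congr rfl fun b _ => by
      rw [hsym a b]; ring
  have hQ0 : ∀ v, (0:ℝ) ≤ quadForm (A x) v := fun v =>
    le_trans (by positivity) (hApos x hx v)
  set α := Real.sqrt (quadForm (A x) ξ) with hαdef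
  set β := Real.sqrt (quadForm (A x) ζ) with hβdef
  have hα0 : 0 ≤ α := Real.sqrt_nonneg _
  have hβ0 : 0 ≤ β := Real.sqrt_nonneg _
  have hQξ : quadForm (A x) ξ = α ^ 2 := (Real.sq_sqrt (hQ0 ξ)).symm
  have hQζ : quadForm (A x) ζ = β ^ 2 := (Real.sq_sqrt (hQ0 ζ)).symm
  -- expansion of quadratic form of ξ + r • ζ and of ξ - ζ
  have happly : ∀ (v w : EuclideanSpace ℝ (Fin n)) (r : ℝ) (i : Fin n),
      (v + r • w) i = v i + r * w i := fun v w r i => rfl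
  have hsapply : ∀ (v w : EuclideanSpace ℝ (Fin n)) (i : Fin n),
      (v - w) i = v i - w i := fun v w i => rfl
  have hQexp : ∀ r : ℝ, quadForm (A x) (ξ + r • ζ) =
      quadForm (A x) ζ * (r * r) + (2 * (∑ i, ∑ j, A x i j * ξ j * ζ i)) * r
        + quadForm (A x) ξ := by
    intro r
    unfold quadForm
    have e : (∑ i, ∑ j, A x i j * (ξ + r • ζ) j * (ξ + r • ζ) i)
        = ∑ i, ∑ j, (A x i j * ξ j * ξ i + r * (A x i j * ξ j * ζ i)
            + r * (A x i j * ζ j * ξ i) + r * (r * (A x i j * ζ j * ζ i))) :=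
      Finset.sum_congr rfl fun i _ => Finset.sum_congr rfl fun j _ => by
        rw [happly, happly]; ring
    rw [e]
    simp only [Finset.sum_add_distrib, ← Finset.mul_sum]
    rw [hS ζ ξ]
    ring
  have hQsub : quadForm (A x) (ξ - ζ) =
      α ^ 2 + β ^ 2 - 2 * (∑ i, ∑ j, A x i j * ξ j * ζ i) := by
    rw [← hQξ, ← hQζ]
    unfold quadForm
    have e : (∑ i, ∑ j, A x i j * (ξ - ζ) j * (ξ - ζ) i)
        = ∑ i, ∑ j, (A x i j * ξ j * ξ i - A x i j * ξ j * ζ i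
            - A x i j * ζ j * ξ i + A x i j * ζ j * ζ i) :=
      Finset.sum_congr rfl fun i _ => Finset.sum_congr rfl fun j _ => by
        rw [hsapply, hsapply]; ring
    rw [e]
    simp only [Finset.sum_add_distrib, Finset.sum_sub_distrib]
    rw [hS ζ ξ]
    ring
  -- Cauchy-Schwarz for the A-form
  have hCS : |(∑ i, ∑ j, A x i j * ξ j * ζ i)| ≤ α * β := by
    have hquad : ∀ r : ℝ, 0 ≤ quadForm (A x) ζ * (r * r)
        + (2 * (∑ i, ∑ j, A x i j * ξ j * ζ i)) * r + quadForm (A x) ξ := by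
      intro r
      rw [← hQexp r]
      exact hQ0 _
    have hd := discrim_le_zero hquad
    rw [discrim] at hd
    have ht2 : (∑ i, ∑ j, A x i j * ξ j * ζ i) ^ 2 ≤ (α * β) ^ 2 := by
      rw [hQζ, hQξ] at hd
      nlinarith [hd]
    calc |(∑ i, ∑ j, A x i j * ξ j * ζ i)|
        = Real.sqrt ((∑ i, ∑ j, A x i j * ξ j * ζ i) ^ 2) := (Real.sqrt_sq_eq_abs _).symm
      _ ≤ Real.sqrt ((α * β) ^ 2) := Real.sqrt_le_sqrt ht2
      _ = α * β := Real.sqrt_sq (by positivity)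
  -- rewrite the target sum
  have hcξ : (quadForm (A x) ξ) ^ ((p - 2) / 2) = α ^ (p - 2) := by
    rw [hQξ]; exact sq_rpow_half hα0 _
  have hcζ : (quadForm (A x) ζ) ^ ((p - 2) / 2) = β ^ (p - 2) := by
    rw [hQζ]; exact sq_rpow_half hβ0 _
  have hTarget : (∑ i, ((quadForm (A x) ξ) ^ ((p - 2) / 2) * (∑ j, A x i j * ξ j)
            - (quadForm (A x) ζ) ^ ((p - 2) / 2) * (∑ j, A x i j * ζ j)) * (ξ i - ζ i))
      = α ^ (p - 2) * α ^ 2 + β ^ (p - 2) * β ^ 2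
        - (α ^ (p - 2) + β ^ (p - 2)) * (∑ i, ∑ j, A x i j * ξ j * ζ i) := by
    rw [hcξ, hcζ, ← hQξ, ← hQζ]
    unfold quadForm
    have e : ∀ i : Fin n, (α ^ (p - 2) * (∑ j, A x i j * ξ j)
          - β ^ (p - 2) * (∑ j, A x i j * ζ j)) * (ξ i - ζ i)
        = ∑ j, (α ^ (p - 2) * (A x i j * ξ j * ξ i) - α ^ (p - 2) * (A x i j * ξ j * ζ i)
            - β ^ (p - 2) * (A x i j * ζ j * ξ i) + β ^ (p - 2) * (A x i j * ζ j * ζ i)) := by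
      intro i
      simp only [Finset.sum_add_distrib, Finset.sum_sub_distrib, ← Finset.mul_sum,
        ← Finset.sum_mul]
      ring
    rw [Finset.sum_congr rfl fun i _ => e i]
    simp only [Finset.sum_add_distrib, Finset.sum_sub_distrib, ← Finset.mul_sum]
    rw [hS ζ ξ]
    ring
  -- positivity of α + β
  have hαβ : 0 < α + β := by
    rcases not_and_or.mp hne with hξ | hζ
    · have h1 : 0 < ‖ξ‖ := norm_pos_iff.mpr hξ
      have h2 : 0 < quadForm (A x) ξ := lt_of_lt_of_le (by positivity) (hApos x hx ξ)
      have : 0 < α := Real.sqrt_pos.mpr h2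
      linarith
    · have h1 : 0 < ‖ζ‖ := norm_pos_iff.mpr hζ
      have h2 : 0 < quadForm (A x) ζ := lt_of_lt_of_le (by positivity) (hApos x hx ζ)
      have : 0 < β := Real.sqrt_pos.mpr h2
      linarith
  -- the scalar inequality
  have hscalar := scalarFinal hp1 hp2 hα0 hβ0 hαβ hCS
  -- identify α^(p-2) * α^2 with α^p
  have hpow : ∀ γ : ℝ, 0 ≤ γ → γ ^ (p - 2) * γ ^ 2 = γ ^ p := by
    intro γ hγ
    have h1 := rpow_succ' (q := p - 2) hγ (by intro h; linarith)
    have h2 := rpow_succ' (q := p - 2 + 1) hγ (by intro h; linarith)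
    calc γ ^ (p - 2) * γ ^ 2 = γ ^ (p - 2) * γ * γ := by ring
      _ = γ ^ (p - 2 + 1) * γ := by rw [h1]
      _ = γ ^ (p - 2 + 1 + 1) := h2
      _ = γ ^ p := by congr 1; ring
  -- lower bounds
  have hlow : τ * ‖ξ - ζ‖ ^ 2 ≤ α ^ 2 + β ^ 2 - 2 * (∑ i, ∑ j, A x i j * ξ j * ζ i) := by
    rw [← hQsub]; exact hApos x hx (ξ - ζ)
  have hupξ : α ≤ Real.sqrt Λ * ‖ξ‖ := by
    rw [hαdef]
    calc Real.sqrt (quadForm (A x) ξ) ≤ Real.sqrt (Λ * ‖ξ‖ ^ 2) :=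
          Real.sqrt_le_sqrt (hbound x hx ξ)
      _ = Real.sqrt Λ * ‖ξ‖ := by
          rw [Real.sqrt_mul hΛ.le, Real.sqrt_sq (norm_nonneg _)]
  have hupζ : β ≤ Real.sqrt Λ * ‖ζ‖ := by
    rw [hβdef]
    calc Real.sqrt (quadForm (A x) ζ) ≤ Real.sqrt (Λ * ‖ζ‖ ^ 2) :=
          Real.sqrt_le_sqrt (hbound x hx ζ)
      _ = Real.sqrt Λ * ‖ζ‖ := by
          rw [Real.sqrt_mul hΛ.le, Real.sqrt_sq (norm_nonneg _)]
  have hup : α + β ≤ Real.sqrt Λ * (‖ξ‖ + ‖ζ‖) := by rw [mul_add]; linarith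
  have hstep2 : Λ ^ ((p - 2) / 2) * (‖ξ‖ + ‖ζ‖) ^ (p - 2) ≤ (α + β) ^ (p - 2) := by
    have h := Real.rpow_le_rpow_of_nonpos hαβ hup (by linarith : p - 2 ≤ 0)
    rw [Real.mul_rpow (Real.sqrt_nonneg _) (by positivity)] at h
    have e : (Real.sqrt Λ) ^ (p - 2) = Λ ^ ((p - 2) / 2) := by
      rw [Real.sqrt_eq_rpow, ← Real.rpow_mul hΛ.le]
      congr 1; ring
    rwa [e] at h
  -- final chain
  have hA1 : 0 ≤ τ * ‖ξ - ζ‖ ^ 2 := by positivity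
  have hA2 : 0 ≤ Λ ^ ((p - 2) / 2) * (‖ξ‖ + ‖ζ‖) ^ (p - 2) := by positivity
  have hmain : (τ * ‖ξ - ζ‖ ^ 2) * (Λ ^ ((p - 2) / 2) * (‖ξ‖ + ‖ζ‖) ^ (p - 2))
      ≤ (α ^ 2 + β ^ 2 - 2 * (∑ i, ∑ j, A x i j * ξ j * ζ i)) * (α + β) ^ (p - 2) :=
    mul_le_mul hlow hstep2 hA2 (le_trans hA1 hlow)
  have hfinal := mul_le_mul_of_nonneg_left hmain (by linarith : (0:ℝ) ≤ p - 1)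
  rw [hTarget]
  calc (p - 1) * τ * Λ ^ ((p - 2) / 2) * (‖ξ - ζ‖ ^ 2 * (‖ξ‖ + ‖ζ‖) ^ (p - 2))
      = (p - 1) * ((τ * ‖ξ - ζ‖ ^ 2) * (Λ ^ ((p - 2) / 2) * (‖ξ‖ + ‖ζ‖) ^ (p - 2))) := by
        ring
    _ ≤ (p - 1) * ((α ^ 2 + β ^ 2 - 2 * (∑ i, ∑ j, A x i j * ξ j * ζ i))
          * (α + β) ^ (p - 2)) := hfinal
    _ ≤ α ^ p + β ^ p - (α ^ (p - 2) + β ^ (p - 2)) * (∑ i, ∑ j, A x i j * ξ j * ζ i) := by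
        linarith [hscalar]
    _ = α ^ (p - 2) * α ^ 2 + β ^ (p - 2) * β ^ 2
        - (α ^ (p - 2) + β ^ (p - 2)) * (∑ i, ∑ j, A x i j * ξ j * ζ i) := by
        rw [hpow α hα0, hpow β hβ0]
end

section
/- For every p ≥ 1 and all real numbers a, b ≥ 0, (a + b)^p ≤ a^p + 2^p·a^{p−1}·b + 4^p·b^p. -/
/-!
If `b ≤ a`, then `a + b` lies on the segment `[a, 2a]`, so convexity of `x ↦ x ^ p` bounds
`(a + b) ^ p` by the chord through `(a, a ^ p)` and `(2a, 2 ^ p a ^ p)`, which is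
`a ^ p + (2 ^ p - 1) a ^ (p - 1) b`. If `a ≤ b`, then simply `(a + b) ^ p ≤ (2b) ^ p ≤ 4 ^ p b ^ p`.
-/

open Real

theorem add_rpow_le_rpow_add_mul_rpow_sub_one_mul {p a b : ℝ} (hp : 1 ≤ p) (ha : 0 < a)
    (hb : 0 ≤ b) (hba : b ≤ a) :
    (a + b) ^ p ≤ a ^ p + (2 ^ p - 1) * a ^ (p - 1) * b := by
  set t := b / a
  have ht : 0 ≤ t := div_nonneg hb ha.le
  have ht1 : t ≤ 1 := (div_le_one ha).2 hba
  have hta : t * a = b := div_mul_cancel₀ b ha.ne'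
  have hconv := (convexOn_rpow hp).2 (Set.mem_Ici.2 ha.le)
    (Set.mem_Ici.2 (by positivity : 0 ≤ 2 * a)) (sub_nonneg.2 ht1) ht (sub_add_cancel 1 t)
  have hsum : (1 - t) • a + t • (2 * a) = a + b := by
    rw [smul_eq_mul, smul_eq_mul, ← hta]; ring
  have hscale : t * a ^ p = a ^ (p - 1) * b := by
    rw [rpow_sub_one ha.ne', ← hta]; field_simp
  calc (a + b) ^ p ≤ (1 - t) • a ^ p + t • (2 * a) ^ p := hsum ▸ hconv
    _ = a ^ p + (2 ^ p - 1) * (t * a ^ p) := by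
      rw [smul_eq_mul, smul_eq_mul, mul_rpow zero_le_two ha.le]; ring
    _ = a ^ p + (2 ^ p - 1) * a ^ (p - 1) * b := by rw [hscale]; ring

theorem add_rpow_le_two_rpow_mul_rpow {p a b : ℝ} (hp : 0 ≤ p) (ha : 0 ≤ a) (hab : a ≤ b) :
    (a + b) ^ p ≤ 2 ^ p * b ^ p := by
  rw [← mul_rpow zero_le_two (ha.trans hab), two_mul]
  exact rpow_le_rpow (by linarith) (by linarith) hp

/-- For `p ≥ 1` and `a, b ≥ 0`,
`(a+b)^p ≤ a^p + 2^p a^{p-1} b + 4^p b^p` (real powers, so `0^0 = 1`). -/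
theorem add_rpow_le (p a b : ℝ) (hp : 1 ≤ p) (ha : 0 ≤ a) (hb : 0 ≤ b) :
    (a + b) ^ p ≤ a ^ p + 2 ^ p * a ^ (p - 1) * b + 4 ^ p * b ^ p := by
  have hp0 : 0 ≤ p := zero_le_one.trans hp
  rcases le_or_gt a b with hab | hba
  · have hmid : 0 ≤ 2 ^ p * a ^ (p - 1) * b := by positivity
    calc (a + b) ^ p ≤ 2 ^ p * b ^ p := add_rpow_le_two_rpow_mul_rpow hp0 ha hab
      _ ≤ 4 ^ p * b ^ p := by gcongr; norm_num
      _ ≤ _ := by linarith [rpow_nonneg ha p]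
  · calc (a + b) ^ p ≤ a ^ p + (2 ^ p - 1) * a ^ (p - 1) * b :=
          add_rpow_le_rpow_add_mul_rpow_sub_one_mul hp (hb.trans_lt hba) hb hba.le
      _ ≤ a ^ p + 2 ^ p * a ^ (p - 1) * b := by gcongr; exact sub_le_self _ zero_le_one
      _ ≤ _ := le_add_of_nonneg_right (by positivity)
end
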